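/- arXiv:1802.05761 — 4 statements merged into one kernel-verified Lean document; each statement's English description precedes it below -/
import Mathlib

section
/- Let k ≥ 1, let W and G be symmetric real k×k matrices with G invertible, and let c₁₂ be a nonzero real constant. Then the 3k×3k block matrix Q with block rows (W, W − c₁₂·G, I), (W − c₁₂·G, W, I), (I, I, 0) is invertible, and its inverse equals the block matrix with block rows ((1/(2c₁₂))·G^{-1}, −(1/(2c₁₂))·G^{-1}, (1/2)·I), (−(1/(2c₁₂))·G^{-1}, (1/(2c₁₂))·G^{-1}, (1/2)·I), ((1/2)·I, (1/2)·I, (c₁₂/2)·G − W). In particular the coefficients k₁₁ = k₂₂ = 1/(2c₁₂), k₁₂ = k₂₁ = −1/(2c₁₂), k₁ = k₂ = 1/2 satisfy k₁₂ = k₂₁, k₁₁ + k₂₁ = k₁₂ + k₂₂ = 0 and k₁ + k₂ = 1. -/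
open Matrix

noncomputable section

/-- Block matrix built from an n×n array of k×k real blocks. -/
def blockMat (n k : ℕ) (B : Fin n → Fin n → Matrix (Fin k) (Fin k) ℝ) :
    Matrix (Fin n × Fin k) (Fin n × Fin k) ℝ :=
  Matrix.of fun p q => B p.1 q.1 p.2 q.2

/-- The k(n+1)×k(n+1) block matrix Q(W, G, (c_{ij}); n): diagonal blocks W,
    off-diagonal (i,j) blocks W − c_{ij}·G for i,j ≤ n, identity blocks in the
    last block row/column (except the (n+1,n+1) block, which is zero). -/
def krigQ (n k : ℕ) (W G : Matrix (Fin k) (Fin k) ℝ) (c : Fin n → Fin n → ℝ) :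
    Matrix (Fin (n + 1) × Fin k) (Fin (n + 1) × Fin k) ℝ :=
  blockMat (n + 1) k fun i j =>
    if hi : (i : ℕ) < n then
      if hj : (j : ℕ) < n then
        if i = j then W else W - c ⟨i, hi⟩ ⟨j, hj⟩ • G
      else (1 : Matrix (Fin k) (Fin k) ℝ)
    else if hj : (j : ℕ) < n then (1 : Matrix (Fin k) (Fin k) ℝ)
      else (0 : Matrix (Fin k) (Fin k) ℝ)

/-- The k(n+1)×k(n+1) block matrix M((k_{ij}), (k_i), c; n): (i,j) block
    k_{ij}·G⁻¹ for i,j ≤ n, blocks k_i·I in the last block row/column, and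
    (n+1,n+1) block c·G − W. -/
def krigM (n k : ℕ) (W G : Matrix (Fin k) (Fin k) ℝ)
    (kk : Fin n → Fin n → ℝ) (kv : Fin n → ℝ) (c : ℝ) :
    Matrix (Fin (n + 1) × Fin k) (Fin (n + 1) × Fin k) ℝ :=
  blockMat (n + 1) k fun i j =>
    if hi : (i : ℕ) < n then
      if hj : (j : ℕ) < n then kk ⟨i, hi⟩ ⟨j, hj⟩ • G⁻¹
      else kv ⟨i, hi⟩ • (1 : Matrix (Fin k) (Fin k) ℝ)
    else if hj : (j : ℕ) < n then kv ⟨j, hj⟩ • (1 : Matrix (Fin k) (Fin k) ℝ)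
      else c • G - W

/-- The kriging constraints: symmetry of the k_{ij}, zero column sums of the
    k_{ij}, and the k_i summing to one. -/
def krigConstraints (n : ℕ) (kk : Fin n → Fin n → ℝ) (kv : Fin n → ℝ) : Prop :=
  (∀ i j, kk i j = kk j i) ∧ (∀ j, ∑ i, kk i j = 0) ∧ (∑ i, kv i) = 1

/-- The k × k(n+1) block row matrix B = (W − c₁·G, …, W − cₙ·G, I). -/
def krigB (n k : ℕ) (W G : Matrix (Fin k) (Fin k) ℝ) (cs : Fin n → ℝ) :
    Matrix (Fin k) (Fin (n + 1) × Fin k) ℝ :=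
  Matrix.of fun a q =>
    (if h : (q.1 : ℕ) < n then W - cs ⟨q.1, h⟩ • G
      else (1 : Matrix (Fin k) (Fin k) ℝ)) a q.2

end

/-!
Since `Q` is square, a right inverse is its inverse, so it suffices to check `Q * M = 1` block
by block. In each block the `W`-terms cancel, and `(1 / (2 c₁₂)) • c₁₂ • G * G⁻¹ = (1 / 2) • 1`
combines with the `(1 / 2) • 1` coming from the identity blocks.
-/

lemma blockMat_mul (n k : ℕ) (B C : Fin n → Fin n → Matrix (Fin k) (Fin k) ℝ) :
    blockMat n k B * blockMat n k C = blockMat n k fun i j => ∑ l, B i l * C l j := by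
  ext ⟨i, a⟩ ⟨j, b⟩
  simp [blockMat, Matrix.mul_apply, Fintype.sum_prod_type, Matrix.sum_apply]

lemma blockMat_one (n k : ℕ) : blockMat n k (fun i j => if i = j then 1 else 0) = 1 := by
  ext ⟨i, a⟩ ⟨j, b⟩
  by_cases h : i = j <;> simp [blockMat, Matrix.one_apply, h]

lemma krigQ_two_mul_krigM_two (k : ℕ) (W G : Matrix (Fin k) (Fin k) ℝ) (hG : IsUnit G)
    (c : ℝ) (hc : c ≠ 0) :
    (krigQ 2 k W G fun _ _ => c) *
      krigM 2 k W G ![![1 / (2 * c), -(1 / (2 * c))], ![-(1 / (2 * c)), 1 / (2 * c)]]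
        ![1 / 2, 1 / 2] (c / 2) = 1 := by
  have hGG : G * G⁻¹ = 1 := G.mul_nonsing_inv (G.isUnit_iff_isUnit_det.mp hG)
  rw [krigQ, krigM, blockMat_mul, ← blockMat_one]
  congr 1
  funext i j
  fin_cases i <;> fin_cases j <;>
    simp [Fin.sum_univ_three, Matrix.sub_mul, Matrix.mul_sub, hGG, smul_smul, smul_sub] <;>
    match_scalars <;> field_simp <;> ring

lemma krigConstraints_two (c : ℝ) :
    krigConstraints 2 ![![1 / (2 * c), -(1 / (2 * c))], ![-(1 / (2 * c)), 1 / (2 * c)]]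
      ![1 / 2, 1 / 2] := by
  refine ⟨?_, ?_, ?_⟩
  · intro i j
    fin_cases i <;> fin_cases j <;> rfl
  · intro j
    fin_cases j <;> simp [Fin.sum_univ_two]
  · norm_num [Fin.sum_univ_two]

theorem stmt1_general (k : ℕ)
    (W G : Matrix (Fin k) (Fin k) ℝ)
    (hGinv : IsUnit G) (c12 : ℝ) (hc12 : c12 ≠ 0) :
    IsUnit (krigQ 2 k W G fun _ _ => c12) ∧
    (krigQ 2 k W G fun _ _ => c12)⁻¹ =
      krigM 2 k W G
        ![![1 / (2 * c12), -(1 / (2 * c12))], ![-(1 / (2 * c12)), 1 / (2 * c12)]]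
        ![1 / 2, 1 / 2] (c12 / 2) ∧
    krigConstraints 2
      ![![1 / (2 * c12), -(1 / (2 * c12))], ![-(1 / (2 * c12)), 1 / (2 * c12)]]
      ![1 / 2, 1 / 2] := by
  have hQM := krigQ_two_mul_krigM_two k W G hGinv c12 hc12
  exact ⟨IsUnit.of_mul_eq_one _ hQM, Matrix.inv_eq_right_inv hQM, krigConstraints_two c12⟩

/-- The 3k×3k block matrix Q with block rows (W, W − c₁₂·G, I),
    (W − c₁₂·G, W, I), (I, I, 0) is invertible, with the stated inverse, and
    the coefficients k₁₁ = k₂₂ = 1/(2c₁₂), k₁₂ = k₂₁ = −1/(2c₁₂),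
    k₁ = k₂ = 1/2 satisfy the kriging constraints. -/
theorem stmt1 (k : ℕ) (hk : 1 ≤ k)
    (W G : Matrix (Fin k) (Fin k) ℝ) (hW : W.IsSymm) (hG : G.IsSymm)
    (hGinv : IsUnit G) (c12 : ℝ) (hc12 : c12 ≠ 0) :
    IsUnit (krigQ 2 k W G fun _ _ => c12) ∧
    (krigQ 2 k W G fun _ _ => c12)⁻¹ =
      krigM 2 k W G
        ![![1 / (2 * c12), -(1 / (2 * c12))], ![-(1 / (2 * c12)), 1 / (2 * c12)]]
        ![1 / 2, 1 / 2] (c12 / 2) ∧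
    krigConstraints 2
      ![![1 / (2 * c12), -(1 / (2 * c12))], ![-(1 / (2 * c12)), 1 / (2 * c12)]]
      ![1 / 2, 1 / 2] :=
  stmt1_general k W G hGinv c12 hc12
end

section
/- Let m ≥ 3, let W and G be symmetric k×k real matrices with G invertible, and let c_{ij} (1 ≤ i ≠ j ≤ m) be real constants with c_{ij} = c_{ji}. Suppose the sub-matrix D := Q(W, G, (c_{ij})_{2 ≤ i ≠ j ≤ m}; m−1) is invertible with D^{-1} = M((k_{ij}), (k_i), c̃; m−1), where ((k_{ij}), (k_i)) satisfy the kriging constraints, and suppose k* := 2·∑_{i=1}^{m−1} c_{1(i+1)} k_i − ∑_{i=1}^{m−1} ∑_{j=1}^{m−1} c_{1(i+1)} c_{1(j+1)} k_{ij} − c̃ is nonzero. Then Q(W, G, (c_{ij}); m) is invertible and there exist real constants k*_{ij} (1 ≤ i,j ≤ m), k*_i (1 ≤ i ≤ m) and c* such that ((k*_{ij}), (k*_i)) satisfy the kriging constraints and Q(W, G, (c_{ij}); m)^{-1} = M((k*_{ij}), (k*_i), c*; m). -/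
/-!
Because `G * G⁻¹ = 1` and the kriging constraints make every `W`-term cancel, the block identity
`krigQ c * krigM K v γ = 1` is equivalent to the scalar identities `C * K = 1 vᵀ - 1` and
`C v = γ 1`, where `C` is `c` with its diagonal set to zero; together with the constraints they
say that the scalar matrix `[[C, 1], [1ᵀ, 0]]` has inverse `[[-K, v], [vᵀ, -γ]]`.
Adding the first point borders `C` by the row `a = (c₁ⱼ)ⱼ`, and the inverse of the bordered
scalar matrix comes from the Schur complement formula: it is the zero-padded old inverse plus a
rank-one correction divided by `k*`, the negative of the Schur complement.
-/

open Matrix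

namespace Kriging

variable {n k : ℕ}

lemma blockMat_mul_blockMat_eq_one_iff (B C : Fin n → Fin n → Matrix (Fin k) (Fin k) ℝ) :
    blockMat n k B * blockMat n k C = 1 ↔ Matrix.of B * Matrix.of C = 1 := by
  have hblock (B) : blockMat n k B = compRingEquiv (Fin n) (Fin k) ℝ (Matrix.of B) := rfl
  rw [hblock, hblock, ← map_mul, ← map_one (compRingEquiv (Fin n) (Fin k) ℝ),
    (compRingEquiv (Fin n) (Fin k) ℝ).injective.eq_iff]

lemma smul_one_eq_ite_iff [NeZero k] (x : ℝ) (p : Prop) [Decidable p] :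
    x • (1 : Matrix (Fin k) (Fin k) ℝ) = (if p then 1 else 0) ↔ x = if p then 1 else 0 := by
  rw [← (smul_left_injective ℝ (one_ne_zero : (1 : Matrix (Fin k) (Fin k) ℝ) ≠ 0)).eq_iff]
  split_ifs <;> simp

def offDiag (c : Fin n → Fin n → ℝ) : Matrix (Fin n) (Fin n) ℝ :=
  Matrix.of fun i j => if i = j then 0 else c i j

section Blocks

variable {W G : Matrix (Fin k) (Fin k) ℝ} (c : Fin n → Fin n → ℝ)

lemma ite_eq_sub_offDiag_smul (i j : Fin n) :
    (if i = j then W else W - c i j • G) = W - offDiag c i j • G := by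
  unfold offDiag
  split_ifs <;> simp [*]

lemma sum_sub_offDiag_smul_mul_smul_inv (hGG : G * G⁻¹ = 1) (K : Matrix (Fin n) (Fin n) ℝ)
    (i j : Fin n) :
    ∑ l, (W - offDiag c i l • G) * (K l j • G⁻¹) =
      (∑ l, K l j) • (W * G⁻¹) - (offDiag c * K) i j • 1 := by
  rw [mul_apply, Finset.sum_smul, Finset.sum_smul, ← Finset.sum_sub_distrib]
  refine Finset.sum_congr rfl fun l _ => ?_
  rw [sub_mul, Matrix.smul_mul, Matrix.mul_smul, Matrix.mul_smul, hGG, smul_smul]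

lemma sum_sub_offDiag_smul_mul_smul_one (v : Fin n → ℝ) (i : Fin n) :
    ∑ l, (W - offDiag c i l • G) * (v l • 1) = (∑ l, v l) • W - (offDiag c *ᵥ v) i • G := by
  rw [mulVec, dotProduct, Finset.sum_smul, Finset.sum_smul, ← Finset.sum_sub_distrib]
  refine Finset.sum_congr rfl fun l _ => ?_
  rw [Matrix.mul_smul, Matrix.mul_one, smul_sub, smul_smul, mul_comm]

end Blocks

lemma krigQ_mul_krigM_eq_one_iff [NeZero k] {W G : Matrix (Fin k) (Fin k) ℝ} (hG : IsUnit G)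
    {c : Fin n → Fin n → ℝ} {K : Matrix (Fin n) (Fin n) ℝ} {v : Fin n → ℝ} {γ : ℝ}
    (hK : ∀ j, ∑ i, K i j = 0) (hv : ∑ i, v i = 1) :
    krigQ n k W G c * krigM n k W G K v γ = 1 ↔
      offDiag c * K = vecMulVec 1 v - 1 ∧ offDiag c *ᵥ v = γ • 1 := by
  have hGG : G * G⁻¹ = 1 := mul_nonsing_inv G ((isUnit_iff_isUnit_det G).mp hG)
  unfold krigQ krigM
  rw [blockMat_mul_blockMat_eq_one_iff, ← Matrix.ext_iff, ← Matrix.ext_iff, funext_iff]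
  simp only [Fin.forall_fin_succ', mul_apply, Fin.sum_univ_castSucc, of_apply, Fin.val_castSucc,
    Fin.is_lt, dite_true, Fin.val_last, lt_irrefl, dite_false, Fin.eta, Fin.castSucc_inj,
    ite_eq_sub_offDiag_smul, one_apply, (Fin.castSucc_lt_last _).ne,
    (Fin.castSucc_lt_last _).ne', if_false, if_true, one_mul, zero_mul, add_zero,
    sum_sub_offDiag_smul_mul_smul_inv c hGG, sum_sub_offDiag_smul_mul_smul_one, hK, hv,
    ← Finset.sum_smul, zero_smul, one_smul, forall_and, and_true, implies_true]
  refine and_congr (forall₂_congr fun i j => ?_) (forall_congr' fun i => ?_)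
  · rw [zero_sub, neg_add_eq_sub, ← sub_smul, smul_one_eq_ite_iff, Matrix.sub_apply,
      vecMulVec_apply, one_apply, Pi.one_apply, one_mul]
    constructor <;> intro h <;> linarith
  · rw [show W - (offDiag c *ᵥ v) i • G + (γ • G - W) = (γ - (offDiag c *ᵥ v) i) • G by module,
      smul_eq_zero, or_iff_left hG.ne_zero, sub_eq_zero, Pi.smul_apply, Pi.one_apply,
      smul_eq_mul, mul_one, eq_comm]

def border (d : ℝ) (a : Fin n → ℝ) (C : Matrix (Fin n) (Fin n) ℝ) :
    Matrix (Fin (n + 1)) (Fin (n + 1)) ℝ :=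
  Matrix.of (vecCons (vecCons d a) fun p => vecCons (a p) (C p))

section Border

variable (d : ℝ) (a : Fin n → ℝ) (C : Matrix (Fin n) (Fin n) ℝ)

lemma border_mulVec_cons (x : ℝ) (y : Fin n → ℝ) :
    border d a C *ᵥ vecCons x y = vecCons (d * x + a ⬝ᵥ y) (x • a + C *ᵥ y) := by
  ext i
  induction i using Fin.cases <;> simp [border, mulVec, mul_comm]

lemma cons_vecMul_border (x : ℝ) (y : Fin n → ℝ) :
    vecCons x y ᵥ* border d a C = vecCons (x * d + y ⬝ᵥ a) (x • a + y ᵥ* C) := by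
  ext i
  induction i using Fin.cases <;> simp [border, vecMul, dotProduct, Fin.sum_univ_succ]

lemma isSymm_border {C : Matrix (Fin n) (Fin n) ℝ} (hC : C.IsSymm) : (border d a C).IsSymm := by
  refine IsSymm.ext fun i j => ?_
  induction i using Fin.cases <;> induction j using Fin.cases <;> simp [border, hC.apply]

end Border

lemma offDiag_eq_border {c : Fin (n + 1) → Fin (n + 1) → ℝ} (hc : ∀ i j, c i j = c j i) :
    offDiag c = border 0 (fun q => c 0 q.succ) (offDiag fun p q => c p.succ q.succ) := by
  ext i j
  induction i using Fin.cases <;> induction j using Fin.cases <;>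
    simp [offDiag, border, (Fin.succ_ne_zero _).symm, hc _ 0]

lemma krigConstraints_iff {K : Matrix (Fin n) (Fin n) ℝ} {v : Fin n → ℝ} :
    krigConstraints n K v ↔ K.IsSymm ∧ 1 ᵥ* K = 0 ∧ 1 ⬝ᵥ v = 1 := by
  simp only [krigConstraints, IsSymm.ext_iff, funext_iff, vecMul, one_dotProduct, Pi.zero_apply]
  exact and_congr ⟨fun h i j => h j i, fun h i j => h j i⟩ Iff.rfl

/-- The scalar matrix `[[C, 1], [1ᵀ, 0]]` has inverse `[[-K, v], [vᵀ, -γ]]`, and `K`, `v` satisfy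
the kriging constraints. -/
def IsKrigingInverse (C K : Matrix (Fin n) (Fin n) ℝ) (v : Fin n → ℝ) (γ : ℝ) : Prop :=
  krigConstraints n K v ∧ C * K = vecMulVec 1 v - 1 ∧ C *ᵥ v = γ • 1

lemma vecCons_one_one : vecCons (1 : ℝ) (1 : Fin n → ℝ) = 1 := Fin.cons_self_tail 1

section BorderStep

variable {C K : Matrix (Fin n) (Fin n) ℝ} {v : Fin n → ℝ} {γ : ℝ} (a : Fin n → ℝ)

lemma one_dotProduct_cons_neg_one (hK : 1 ᵥ* K = 0) (hv : 1 ⬝ᵥ v = 1) :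
    1 ⬝ᵥ vecCons (-1) (v - K *ᵥ a) = 0 := by
  rw [← vecCons_one_one, cons_dotProduct_cons, dotProduct_sub, dotProduct_mulVec, hK, hv,
    zero_dotProduct]
  ring

lemma border_mulVec_cons_neg_one (hCK : C * K = vecMulVec 1 v - 1) (hCv : C *ᵥ v = γ • 1) :
    border 0 a C *ᵥ vecCons (-1) (v - K *ᵥ a) =
      (2 * (a ⬝ᵥ v) - a ⬝ᵥ (K *ᵥ a) - γ) • vecCons 1 0 + (γ - a ⬝ᵥ v) • 1 := by
  have hCt : C *ᵥ (v - K *ᵥ a) = (γ - a ⬝ᵥ v) • 1 + a := by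
    rw [mulVec_sub, mulVec_mulVec, hCK, hCv, sub_mulVec, vecMulVec_mulVec, one_mulVec,
      op_smul_eq_smul, dotProduct_comm]
    module
  rw [border_mulVec_cons, hCt, ← vecCons_one_one]
  ext i
  induction i using Fin.cases <;> simp [dotProduct_sub]
  ring

lemma border_mulVec_cons_zero (hCv : C *ᵥ v = γ • 1) :
    border 0 a C *ᵥ vecCons 0 v = γ • 1 - (γ - a ⬝ᵥ v) • vecCons 1 0 := by
  rw [border_mulVec_cons, hCv, ← vecCons_one_one]
  ext i
  induction i using Fin.cases <;> simp

lemma border_mul_border_zero_zero (hK : K.IsSymm) (hCK : C * K = vecMulVec 1 v - 1) :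
    border 0 a C * border 0 0 K =
      vecMulVec 1 (vecCons 0 v) - 1 - vecMulVec (vecCons 1 0) (vecCons (-1) (v - K *ᵥ a)) := by
  ext i j
  rw [Matrix.sub_apply, Matrix.sub_apply, vecMulVec_apply, vecMulVec_apply, mul_apply]
  induction i using Fin.cases with
  | zero =>
    induction j using Fin.cases <;>
      simp [border, Fin.sum_univ_succ, mulVec, dotProduct, hK.apply _ _, mul_comm,
        (Fin.succ_ne_zero _).symm]
  | succ p =>
    induction j using Fin.cases with
    | zero => simp [border, Fin.sum_univ_succ]
    | succ q => simp [border, Fin.sum_univ_succ, ← mul_apply, hCK, one_apply]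

end BorderStep

theorem IsKrigingInverse.exists_border {C K : Matrix (Fin n) (Fin n) ℝ} {v : Fin n → ℝ} {γ : ℝ}
    (h : IsKrigingInverse C K v γ) (a : Fin n → ℝ)
    (hκ : 2 * (a ⬝ᵥ v) - a ⬝ᵥ (K *ᵥ a) - γ ≠ 0) :
    ∃ K' v' γ', IsKrigingInverse (border 0 a C) K' v' γ' := by
  obtain ⟨hconstr, hCK, hCv⟩ := h
  obtain ⟨hKsymm, hK1, hv1⟩ := krigConstraints_iff.mp hconstr
  have hw := one_dotProduct_cons_neg_one a hK1 hv1
  have hCw := border_mulVec_cons_neg_one a hCK hCv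
  have hCv₀ := border_mulVec_cons_zero a hCv
  have hCK₀ := border_mul_border_zero_zero a hKsymm hCK
  set κ := 2 * (a ⬝ᵥ v) - a ⬝ᵥ (K *ᵥ a) - γ
  set s := γ - a ⬝ᵥ v
  set w : Fin (n + 1) → ℝ := vecCons (-1) (v - K *ᵥ a)
  -- The old inverse maps the new border column `(a, 1)` to `(v - K *ᵥ a, -s)`.
  refine ⟨border 0 0 K + κ⁻¹ • vecMulVec w w, vecCons 0 v + (κ⁻¹ * s) • w, γ + κ⁻¹ * s * s,
    krigConstraints_iff.mpr ⟨?_, ?_, ?_⟩, ?_, ?_⟩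
  · exact (isSymm_border 0 0 hKsymm).add (IsSymm.smul (transpose_vecMulVec w w) κ⁻¹)
  · rw [vecMul_add, vecMul_smul, vecMul_vecMulVec, hw, zero_smul, smul_zero, add_zero,
      ← vecCons_one_one, cons_vecMul_border, hK1]
    simp
  · rw [dotProduct_add, dotProduct_smul, hw, ← vecCons_one_one, cons_dotProduct_cons, hv1]
    simp
  · rw [Matrix.mul_add, Matrix.mul_smul, mul_vecMulVec, hCK₀, hCw, add_vecMulVec, smul_vecMulVec,
      smul_vecMulVec, vecMulVec_add, vecMulVec_smul, smul_add, smul_smul, smul_smul,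
      inv_mul_cancel₀ hκ, one_smul]
    abel
  · have hsκ : κ⁻¹ * s * κ = s := by field_simp
    rw [mulVec_add, mulVec_smul, hCv₀, hCw, smul_add, smul_smul, smul_smul, hsκ]
    module

end Kriging

theorem stmt3_general (k n : ℕ) (hk : 1 ≤ k)
    (W G : Matrix (Fin k) (Fin k) ℝ)
    (hGinv : IsUnit G)
    (c : Fin (n + 1) → Fin (n + 1) → ℝ) (hc : ∀ i j, c i j = c j i)
    (kk : Fin n → Fin n → ℝ) (kv : Fin n → ℝ) (ct : ℝ)
    (hconstr : krigConstraints n kk kv)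
    (hD : IsUnit (krigQ n k W G fun a b => c a.succ b.succ))
    (hDinv : (krigQ n k W G fun a b => c a.succ b.succ)⁻¹ =
      krigM n k W G kk kv ct)
    (kstar : ℝ)
    (hkstar : kstar = 2 * (∑ i, c 0 i.succ * kv i) -
      (∑ i, ∑ j, c 0 i.succ * c 0 j.succ * kk i j) - ct)
    (hkne : kstar ≠ 0) :
    IsUnit (krigQ (n + 1) k W G c) ∧
    ∃ (kk' : Fin (n + 1) → Fin (n + 1) → ℝ) (kv' : Fin (n + 1) → ℝ) (c' : ℝ),
      krigConstraints (n + 1) kk' kv' ∧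
      (krigQ (n + 1) k W G c)⁻¹ = krigM (n + 1) k W G kk' kv' c' := by
  have : NeZero k := ⟨by omega⟩
  have hDM : (krigQ n k W G fun a b => c a.succ b.succ) * krigM n k W G kk kv ct = 1 := by
    rw [← hDinv, mul_nonsing_inv _ ((isUnit_iff_isUnit_det _).mp hD)]
  have hinv : Kriging.IsKrigingInverse (Kriging.offDiag fun a b => c a.succ b.succ) kk kv ct :=
    ⟨hconstr, (Kriging.krigQ_mul_krigM_eq_one_iff hGinv hconstr.2.1 hconstr.2.2).mp hDM⟩
  have hquad : (fun i => c 0 i.succ) ⬝ᵥ (kk *ᵥ fun i => c 0 i.succ) =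
      ∑ i, ∑ j, c 0 i.succ * c 0 j.succ * kk i j := by
    simp only [dotProduct, mulVec, Finset.mul_sum]
    exact Finset.sum_congr rfl fun i _ => Finset.sum_congr rfl fun j _ => by ring
  obtain ⟨kk', kv', c', hconstr', hmul⟩ :=
    hinv.exists_border _ (by rw [hquad]; exact hkstar ▸ hkne)
  rw [← Kriging.offDiag_eq_border hc] at hmul
  have hQM :=
    (Kriging.krigQ_mul_krigM_eq_one_iff (W := W) hGinv hconstr'.2.1 hconstr'.2.2).mpr hmul
  exact ⟨.of_mul_eq_one _ hQM, kk', kv', c', hconstr', inv_eq_right_inv hQM⟩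

/-- Induction step: with m = n+1 (so m ≥ 3 means n ≥ 2), if the sub-matrix
    D = Q(W, G, (c_{ij})_{2 ≤ i ≠ j ≤ m}; m−1) is invertible with inverse of
    the form M((k_{ij}), (k_i), c̃; m−1), where the coefficients satisfy the
    kriging constraints, and if k* ≠ 0, then Q(W, G, (c_{ij}); m) is
    invertible and its inverse is of the form M((k*_{ij}), (k*_i), c*; m) with
    coefficients satisfying the kriging constraints. -/
theorem stmt3 (k n : ℕ) (hk : 1 ≤ k) (hn : 2 ≤ n)
    (W G : Matrix (Fin k) (Fin k) ℝ) (hW : W.IsSymm) (hG : G.IsSymm)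
    (hGinv : IsUnit G)
    (c : Fin (n + 1) → Fin (n + 1) → ℝ) (hc : ∀ i j, c i j = c j i)
    (kk : Fin n → Fin n → ℝ) (kv : Fin n → ℝ) (ct : ℝ)
    (hconstr : krigConstraints n kk kv)
    (hD : IsUnit (krigQ n k W G fun a b => c a.succ b.succ))
    (hDinv : (krigQ n k W G fun a b => c a.succ b.succ)⁻¹ =
      krigM n k W G kk kv ct)
    (kstar : ℝ)
    (hkstar : kstar = 2 * (∑ i, c 0 i.succ * kv i) -
      (∑ i, ∑ j, c 0 i.succ * c 0 j.succ * kk i j) - ct)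
    (hkne : kstar ≠ 0) :
    IsUnit (krigQ (n + 1) k W G c) ∧
    ∃ (kk' : Fin (n + 1) → Fin (n + 1) → ℝ) (kv' : Fin (n + 1) → ℝ) (c' : ℝ),
      krigConstraints (n + 1) kk' kv' ∧
      (krigQ (n + 1) k W G c)⁻¹ = krigM (n + 1) k W G kk' kv' c' :=
  stmt3_general k n hk W G hGinv c hc kk kv ct hconstr hD hDinv kstar hkstar hkne
end

section
/- Let m ≥ 3, let W and G be symmetric k×k real matrices with G invertible, let c₂, …, c_m be real constants, and let k_{ij} (1 ≤ i,j ≤ m−1), k_i (1 ≤ i ≤ m−1) and c̃ be real constants such that ((k_{ij}), (k_i)) satisfy the kriging constraints. Let B be the k × km block row matrix (W − c₂·G, …, W − c_m·G, I), and let M := M((k_{ij}), (k_i), c̃; m−1). Then the Schur complement W − B·M·Bᵀ equals k*·G, where k* := 2·∑_{i=1}^{m−1} c_{i+1} k_i − ∑_{i=1}^{m−1} ∑_{j=1}^{m−1} c_{i+1} c_{j+1} k_{ij} − c̃ . In particular, if k* ≠ 0 then the Schur complement is invertible with inverse (1/k*)·G^{-1}. -/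
open Matrix

/-! Blockwise, `B M Bᵀ = ∑_{p,q} B_p M_{pq} B_qᵀ`. The `n × n` part
`∑ k_{ij} (W - c_i G) G⁻¹ (W - c_j G)` collapses to `(∑ c_i c_j k_{ij}) G`, since the zero row
and column sums of `(k_{ij})` kill every term containing `W`; the `k_i`-blocks contribute
`2W - 2 (∑ c_i k_i) G` because `∑ k_i = 1`, and the corner contributes `c̃ G - W`. Hence
`B M Bᵀ = W - k* G`. -/

open Finset

section BlockProducts

variable {R ι m m' κ : Type*} [NonUnitalNonAssocSemiring R] [Fintype ι] [Fintype κ]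

def blockRow (B : ι → Matrix m κ R) : Matrix m (ι × κ) R :=
  Matrix.of fun a q => B q.1 a q.2

theorem blockRow_mul_mul_blockRow_transpose (B : ι → Matrix m κ R)
    (M : ι → ι → Matrix κ κ R) (C : ι → Matrix m' κ R) :
    blockRow B * (Matrix.of fun p q => M p.1 q.1 p.2 q.2 : Matrix (ι × κ) (ι × κ) R) *
        (blockRow C)ᵀ =
      (∑ p, ∑ q, B p * M p q * (C q)ᵀ : Matrix m m' R) := by
  ext a b
  simp only [blockRow, Matrix.sum_apply, Matrix.mul_apply, Matrix.transpose_apply,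
    Matrix.of_apply, Fintype.sum_prod_type, sum_mul]
  calc _ = ∑ q, ∑ p, ∑ j, ∑ i, B p a i * M p q i j * C q b j :=
        sum_congr rfl fun _ _ => sum_comm
    _ = _ := sum_comm

end BlockProducts

theorem sum_sum_smul_sub_smul_mul_mul_sub_smul {R A ι : Type*} [CommRing R] [Ring A]
    [Algebra R A] [Fintype ι] {a : ι → ι → R} (hrow : ∀ i, ∑ j, a i j = 0)
    (hcol : ∀ j, ∑ i, a i j = 0) (c : ι → R) (w g x : A) :
    ∑ i, ∑ j, a i j • ((w - c i • g) * x * (w - c j • g)) =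
      (∑ i, ∑ j, c i * c j * a i j) • (g * x * g) := by
  have hexpand : ∀ i j, a i j • ((w - c i • g) * x * (w - c j • g)) =
      a i j • (w * x * w) - (a i j * c j) • (w * x * g) - (a i j * c i) • (g * x * w) +
        (c i * c j * a i j) • (g * x * g) := by
    intro i j
    simp only [sub_mul, mul_sub, smul_mul_assoc, mul_smul_comm]
    module
  have hrow' : ∑ i, ∑ j, a i j * c i = 0 := by
    simp [← sum_mul, hrow]
  have hcol' : ∑ i, ∑ j, a i j * c j = 0 := by
    rw [sum_comm]; simp [← sum_mul, hcol]
  simp only [hexpand, sum_add_distrib, sum_sub_distrib, ← sum_smul, hrow, hrow', hcol',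
    sum_const_zero, zero_smul, sub_zero, zero_add]

noncomputable section Kriging

variable {n k : ℕ} (W G : Matrix (Fin k) (Fin k) ℝ) (cs : Fin n → ℝ)
  (kk : Fin n → Fin n → ℝ) (kv : Fin n → ℝ) (c : ℝ)

def krigBBlock (p : Fin (n + 1)) : Matrix (Fin k) (Fin k) ℝ :=
  if h : (p : ℕ) < n then W - cs ⟨p, h⟩ • G else 1

def krigMBlock (p q : Fin (n + 1)) : Matrix (Fin k) (Fin k) ℝ :=
  if hp : (p : ℕ) < n then
    if hq : (q : ℕ) < n then kk ⟨p, hp⟩ ⟨q, hq⟩ • G⁻¹ else kv ⟨p, hp⟩ • 1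
  else if hq : (q : ℕ) < n then kv ⟨q, hq⟩ • 1 else c • G - W

theorem krigB_eq_blockRow : krigB n k W G cs = blockRow (krigBBlock W G cs) := rfl

theorem krigM_eq_of_krigMBlock :
    krigM n k W G kk kv c = Matrix.of fun p q => krigMBlock W G kk kv c p.1 q.1 p.2 q.2 := rfl

@[simp]
theorem krigBBlock_castSucc (i : Fin n) : krigBBlock W G cs i.castSucc = W - cs i • G := by
  simp [krigBBlock]

@[simp]
theorem krigBBlock_last : krigBBlock W G cs (Fin.last n) = 1 := by
  simp [krigBBlock]

@[simp]
theorem krigMBlock_castSucc_castSucc (i j : Fin n) :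
    krigMBlock W G kk kv c i.castSucc j.castSucc = kk i j • G⁻¹ := by
  simp [krigMBlock]

@[simp]
theorem krigMBlock_castSucc_last (i : Fin n) :
    krigMBlock W G kk kv c i.castSucc (Fin.last n) = kv i • 1 := by
  simp [krigMBlock]

@[simp]
theorem krigMBlock_last_castSucc (j : Fin n) :
    krigMBlock W G kk kv c (Fin.last n) j.castSucc = kv j • 1 := by
  simp [krigMBlock]

@[simp]
theorem krigMBlock_last_last :
    krigMBlock W G kk kv c (Fin.last n) (Fin.last n) = c • G - W := by
  simp [krigMBlock]

variable {W G kk kv}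

theorem krigConstraints.sum_row_eq_zero (h : krigConstraints n kk kv) (i : Fin n) :
    ∑ j, kk i j = 0 := by
  simpa only [h.1 i] using h.2.1 i

theorem krigB_mul_krigM_mul_krigB_transpose (hW : W.IsSymm) (hG : G.IsSymm) (hGinv : IsUnit G)
    (h : krigConstraints n kk kv) :
    krigB n k W G cs * krigM n k W G kk kv c * (krigB n k W G cs)ᵀ =
      W - (2 * (∑ i, cs i * kv i) - (∑ i, ∑ j, cs i * cs j * kk i j) - c) • G := by
  have hrow := h.sum_row_eq_zero
  obtain ⟨-, hcol, hsum⟩ := h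
  have hGG : G * G⁻¹ * G = G := by
    rw [Matrix.mul_nonsing_inv G ((Matrix.isUnit_iff_isUnit_det G).mp hGinv), Matrix.one_mul]
  rw [krigB_eq_blockRow, krigM_eq_of_krigMBlock, blockRow_mul_mul_blockRow_transpose]
  simp only [Fin.sum_univ_castSucc, krigBBlock_castSucc, krigBBlock_last,
    krigMBlock_castSucc_castSucc, krigMBlock_castSucc_last, krigMBlock_last_castSucc,
    krigMBlock_last_last, Matrix.transpose_sub, Matrix.transpose_smul, Matrix.transpose_one,
    hW.eq, hG.eq, Matrix.mul_one, Matrix.one_mul, Matrix.mul_smul, Matrix.smul_mul,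
    sum_add_distrib]
  rw [sum_sum_smul_sub_smul_mul_mul_sub_smul hrow hcol, hGG]
  simp only [smul_sub, sum_sub_distrib, ← sum_smul, smul_smul, hsum, one_smul,
    mul_comm (kv _)]
  module

end Kriging

theorem stmt5_general (k n : ℕ)
    (W G : Matrix (Fin k) (Fin k) ℝ) (hW : W.IsSymm) (hG : G.IsSymm)
    (hGinv : IsUnit G) (cs : Fin n → ℝ)
    (kk : Fin n → Fin n → ℝ) (kv : Fin n → ℝ) (ct : ℝ)
    (hconstr : krigConstraints n kk kv)
    (kstar : ℝ)
    (hkstar : kstar = 2 * (∑ i, cs i * kv i) -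
      (∑ i, ∑ j, cs i * cs j * kk i j) - ct) :
    W - krigB n k W G cs * krigM n k W G kk kv ct * (krigB n k W G cs)ᵀ =
      kstar • G ∧
    (kstar ≠ 0 →
      IsUnit (W - krigB n k W G cs * krigM n k W G kk kv ct *
        (krigB n k W G cs)ᵀ) ∧
      (W - krigB n k W G cs * krigM n k W G kk kv ct *
        (krigB n k W G cs)ᵀ)⁻¹ = (1 / kstar) • G⁻¹) := by
  have hschur : W - krigB n k W G cs * krigM n k W G kk kv ct * (krigB n k W G cs)ᵀ =
      kstar • G := by
    rw [krigB_mul_krigM_mul_krigB_transpose cs ct hW hG hGinv hconstr, hkstar, sub_sub_cancel]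
  refine ⟨hschur, fun hkstar_ne => ?_⟩
  have hinv : kstar • G * (1 / kstar) • G⁻¹ = 1 := by
    rw [smul_mul_smul_comm, mul_one_div_cancel hkstar_ne,
      mul_nonsing_inv G ((isUnit_iff_isUnit_det G).mp hGinv), one_smul]
  rw [hschur]
  exact ⟨(isUnit_iff_isUnit_det _).mpr (isUnit_det_of_right_inverse hinv),
    inv_eq_right_inv hinv⟩

/-- With m = n+1 (so m ≥ 3 means n ≥ 2) and cs i = c_{i+1}: the Schur
    complement W − B·M·Bᵀ equals k*·G, where
    k* = 2·∑ c_{i+1} k_i − ∑∑ c_{i+1} c_{j+1} k_{ij} − c̃; in particular, if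
    k* ≠ 0, the Schur complement is invertible with inverse (1/k*)·G⁻¹. -/
theorem stmt5 (k n : ℕ) (hk : 1 ≤ k) (hn : 2 ≤ n)
    (W G : Matrix (Fin k) (Fin k) ℝ) (hW : W.IsSymm) (hG : G.IsSymm)
    (hGinv : IsUnit G) (cs : Fin n → ℝ)
    (kk : Fin n → Fin n → ℝ) (kv : Fin n → ℝ) (ct : ℝ)
    (hconstr : krigConstraints n kk kv)
    (kstar : ℝ)
    (hkstar : kstar = 2 * (∑ i, cs i * kv i) -
      (∑ i, ∑ j, cs i * cs j * kk i j) - ct) :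
    W - krigB n k W G cs * krigM n k W G kk kv ct * (krigB n k W G cs)ᵀ =
      kstar • G ∧
    (kstar ≠ 0 →
      IsUnit (W - krigB n k W G cs * krigM n k W G kk kv ct *
        (krigB n k W G cs)ᵀ) ∧
      (W - krigB n k W G cs * krigM n k W G kk kv ct *
        (krigB n k W G cs)ᵀ)⁻¹ = (1 / kstar) • G⁻¹) :=
  stmt5_general k n W G hW hG hGinv cs kk kv ct hconstr kstar hkstar
end

section
/- Let m ≥ 3 and let c₂, …, c_m, k_{ij} (1 ≤ i,j ≤ m−1), k_i (1 ≤ i ≤ m−1) and c̃ be real constants such that k_{ij} = k_{ji} for all i,j, ∑_{i=1}^{m−1} k_{ij} = 0 for every j, and ∑_{i=1}^{m−1} k_i = 1. Define β_i := k_i − ∑_{l=1}^{m−1} c_{l+1} k_{li}, g := c̃ − ∑_{l=1}^{m−1} c_{l+1} k_l, and suppose k* := 2·∑_{l=1}^{m−1} c_{l+1} k_l − ∑_{l=1}^{m−1} ∑_{j=1}^{m−1} c_{l+1} c_{j+1} k_{lj} − c̃ is nonzero. Define new coefficients, indexed by 1, …, m, as follows: k*_{11} := 1/k*; k*_{1(j+1)}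 := k*_{(j+1)1} := −β_j/k* for 1 ≤ j ≤ m−1; k*_{(i+1)(j+1)} := k_{ij} + β_i β_j / k* for 1 ≤ i,j ≤ m−1; k*_1 := −g/k*; and k*_{i+1} := k_i + β_i g / k* for 1 ≤ i ≤ m−1. Then k*_{ij} = k*_{ji} for all 1 ≤ i,j ≤ m, ∑_{i=1}^{m} k*_{ij} = 0 for every j = 1, …, m, and ∑_{i=1}^{m} k*_i = 1. -/
/-!
The new matrix borders the rank-one update `k + ββᵀ/k*` by `1/k*` and `-β/k*`. Since the
rows of `k` sum to zero, `∑ β = ∑ kᵢ = 1`, and then every `1/k*`-term cancels in the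
column sums and in `∑ k*ᵢ`.
-/

open Finset

section BorderedMatrix

variable {α : Type*} {n : ℕ}

/-- The `(n+1) × (n+1)` matrix `[[a, bᵀ], [b, A]]`. -/
def borderedMatrix (a : α) (b : Fin n → α) (A : Fin n → Fin n → α) :
    Fin (n + 1) → Fin (n + 1) → α :=
  Fin.cons (Fin.cons a b) fun i => Fin.cons (b i) (A i)

theorem borderedMatrix_symm {a : α} {b : Fin n → α} {A : Fin n → Fin n → α}
    (hA : ∀ i j, A i j = A j i) (i j : Fin (n + 1)) :
    borderedMatrix a b A i j = borderedMatrix a b A j i := by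
  cases i using Fin.cases <;> cases j using Fin.cases <;>
    simp only [borderedMatrix, Fin.cons_zero, Fin.cons_succ, hA]

theorem sum_borderedMatrix_eq_zero [AddCommMonoid α] {a : α} {b : Fin n → α}
    {A : Fin n → Fin n → α} (h₀ : a + ∑ j, b j = 0) (hA : ∀ j, b j + ∑ i, A i j = 0)
    (j : Fin (n + 1)) : ∑ i, borderedMatrix a b A i j = 0 := by
  cases j using Fin.cases
  · simpa only [borderedMatrix, Fin.sum_univ_succ, Fin.cons_zero, Fin.cons_succ] using h₀
  · simpa only [borderedMatrix, Fin.sum_univ_succ, Fin.cons_zero, Fin.cons_succ] using hA _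

end BorderedMatrix

theorem sum_sum_mul_eq_zero_of_sum_eq_zero {ι R : Type*} [Fintype ι]
    [NonUnitalNonAssocSemiring R] {c : ι → R} {A : ι → ι → R} (hA : ∀ l, ∑ i, A l i = 0) :
    ∑ i, ∑ l, c l * A l i = 0 := by
  rw [sum_comm]
  simp only [← mul_sum, hA, mul_zero, sum_const_zero]

/-- Here `m = n + 1`, `cs i = c_{i+1}`, and index `0 : Fin (n + 1)` is the paper's index 1. -/
theorem stmt8_general (n : ℕ) (cs : Fin n → ℝ)
    (kk : Fin n → Fin n → ℝ) (kv : Fin n → ℝ)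
    (hsym : ∀ i j, kk i j = kk j i) (hcol : ∀ j, ∑ i, kk i j = 0)
    (hsum : ∑ i, kv i = 1)
    (β : Fin n → ℝ) (hβ : ∀ i, β i = kv i - ∑ l, cs l * kk l i)
    (g : ℝ)
    (kstar : ℝ)
    (kk' : Fin (n + 1) → Fin (n + 1) → ℝ)
    (hkk' : kk' = Fin.cons
      (Fin.cons (1 / kstar) fun j => -β j / kstar)
      (fun i => Fin.cons (-β i / kstar)
        fun j => kk i j + β i * β j / kstar))
    (kv' : Fin (n + 1) → ℝ)
    (hkv' : kv' = Fin.cons (-g / kstar) fun i => kv i + β i * g / kstar) :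
    (∀ i j, kk' i j = kk' j i) ∧ (∀ j, ∑ i, kk' i j = 0) ∧
      ∑ i, kv' i = 1 := by
  subst hkk' hkv'
  have hrow : ∀ l, ∑ i, kk l i = 0 := fun l => by simpa only [hsym l] using hcol l
  have hβsum : ∑ i, β i = 1 := by
    simp only [hβ, sum_sub_distrib, hsum, sum_sum_mul_eq_zero_of_sum_eq_zero hrow, sub_zero]
  refine ⟨borderedMatrix_symm fun i j => by rw [hsym]; ring,
    sum_borderedMatrix_eq_zero ?_ fun j => ?_, ?_⟩
  · rw [← sum_div, sum_neg_distrib, hβsum]; ring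
  · rw [sum_add_distrib, hcol, ← sum_div, ← sum_mul, hβsum]; ring
  · rw [Fin.sum_cons, sum_add_distrib, hsum, ← sum_div, ← sum_mul, hβsum]; ring

/-- With m = n+1 (so m ≥ 3 means n ≥ 2) and cs i = c_{i+1}: the new
    coefficients k*_{ij}, k*_i (indexed by Fin (n+1), the index 0 playing the
    role of the paper's index 1) again satisfy the kriging constraints:
    symmetry, zero column sums, and the k*_i summing to one. -/
theorem stmt8 (n : ℕ) (hn : 2 ≤ n) (cs : Fin n → ℝ)
    (kk : Fin n → Fin n → ℝ) (kv : Fin n → ℝ) (ct : ℝ)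
    (hsym : ∀ i j, kk i j = kk j i) (hcol : ∀ j, ∑ i, kk i j = 0)
    (hsum : ∑ i, kv i = 1)
    (β : Fin n → ℝ) (hβ : ∀ i, β i = kv i - ∑ l, cs l * kk l i)
    (g : ℝ) (hg : g = ct - ∑ l, cs l * kv l)
    (kstar : ℝ)
    (hkstar : kstar = 2 * (∑ l, cs l * kv l) -
      (∑ l, ∑ j, cs l * cs j * kk l j) - ct)
    (hkne : kstar ≠ 0)
    (kk' : Fin (n + 1) → Fin (n + 1) → ℝ)
    (hkk' : kk' = Fin.cons
      (Fin.cons (1 / kstar) fun j => -β j / kstar)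
      (fun i => Fin.cons (-β i / kstar)
        fun j => kk i j + β i * β j / kstar))
    (kv' : Fin (n + 1) → ℝ)
    (hkv' : kv' = Fin.cons (-g / kstar) fun i => kv i + β i * g / kstar) :
    (∀ i j, kk' i j = kk' j i) ∧ (∀ j, ∑ i, kk' i j = 0) ∧
      ∑ i, kv' i = 1 :=
  stmt8_general n cs kk kv hsym hcol hsum β hβ g kstar kk' hkk' kv' hkv'
end
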